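/- arXiv:1502.05751 — 6 statements merged into one kernel-verified Lean document; each statement's English description precedes it below -/
import Mathlib

section
/- Let A be a complex n×n matrix and suppose there exists a Hermitian positive-definite n×n matrix Y such that A* Y A = Y, where A* denotes the conjugate transpose. Then A is diagonalizable over ℂ and every eigenvalue of A has modulus 1. -/
open Matrix
open scoped ComplexOrder

/-!
`A` is an isometry of the inner product `⟪x, y⟫ = x* Y y`. An eigenvector `v` for `μ` gives
`⟪v, v⟫ = |μ|² ⟪v, v⟫`, so `|μ| = 1`. If `v` were a generalized eigenvector of order two, with
`w = A v - μ v ≠ 0` an eigenvector, then `⟪v, w⟫ = ⟪A v, A w⟫ = |μ|² ⟪v, w⟫ + μ ⟪w, w⟫` would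
force `⟪w, w⟫ = 0`. Hence over `ℂ` every generalized eigenspace is an eigenspace, the eigenspaces
span, and a basis of eigenvectors diagonalizes `A`.
-/

namespace Module.End

variable {K V : Type*} [Field K] [AddCommGroup V] [Module K V]

theorem maxGenEigenspace_eq_eigenspace_of_genEigenspace_two_le {f : End K V} {μ : K}
    (h : f.genEigenspace μ 2 ≤ f.eigenspace μ) : f.maxGenEigenspace μ = f.eigenspace μ := by
  have hstable : LinearMap.ker ((f - μ • 1) ^ 1) = LinearMap.ker ((f - μ • 1) ^ 2) := by
    rw [← genEigenspace_nat, ← genEigenspace_nat, Nat.cast_one]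
    exact le_antisymm ((f.genEigenspace μ).monotone (by norm_num)) h
  refine le_antisymm ?_ eigenspace_le_maxGenEigenspace
  rw [← iSup_genEigenspace_eq]
  refine iSup_le fun k => ?_
  rcases k with _ | m
  · simp
  · rw [genEigenspace_nat, add_comm, ← ker_pow_constant hstable m, ← genEigenspace_nat,
      Nat.cast_one]

theorem iSup_eigenspace_eq_top_of_genEigenspace_two_le [IsAlgClosed K] [FiniteDimensional K V]
    {f : End K V} (h : ∀ μ, f.genEigenspace μ 2 ≤ f.eigenspace μ) :
    ⨆ μ, f.eigenspace μ = ⊤ := by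
  simpa only [maxGenEigenspace_eq_eigenspace_of_genEigenspace_two_le (h _)] using
    f.iSup_maxGenEigenspace_eq_top

end Module.End

namespace Matrix

theorem exists_isUnit_eq_inv_mul_diagonal_mul_of_iSup_eigenspace_eq_top
    {K n : Type*} [Field K] [Fintype n] [DecidableEq n] {A : Matrix n n K}
    (hA : ⨆ μ, Module.End.eigenspace A.mulVecLin μ = ⊤) :
    ∃ (V : Matrix n n K) (d : n → K), IsUnit V ∧ A = V⁻¹ * diagonal d * V := by
  classical
  have hInt : DirectSum.IsInternal fun μ => Module.End.eigenspace A.mulVecLin μ :=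
    DirectSum.isInternal_submodule_of_iSupIndep_of_iSup_eq_top
      (Module.End.eigenspaces_iSupIndep A.mulVecLin) hA
  let v μ := Module.Free.chooseBasis K (Module.End.eigenspace A.mulVecLin μ)
  let e := (hInt.collectedBasis v).indexEquiv (Pi.basisFun K n)
  let b := (hInt.collectedBasis v).reindex e
  let d i := (e.symm i).1
  have hb (i : n) : A.mulVecLin (b i) = d i • b i := by
    rw [Module.Basis.reindex_apply]
    exact Module.End.mem_eigenspace_iff.mp (hInt.collectedBasis_mem v (e.symm i))
  have hdiag : LinearMap.toMatrix b b A.mulVecLin = diagonal d := by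
    ext i j
    rw [LinearMap.toMatrix_apply, hb, map_smul, b.repr_self]
    rcases eq_or_ne i j with rfl | hij
    · simp
    · simp [hij]
  let std := Pi.basisFun K n
  refine ⟨b.toMatrix std, d, ?_, ?_⟩
  · let := b.invertibleToMatrix std
    exact isUnit_of_invertible _
  · rw [← hdiag, inv_eq_left_inv (std.toMatrix_mul_toMatrix_flip b),
      basis_toMatrix_mul_linearMap_toMatrix_mul_basis_toMatrix, LinearMap.toMatrix_eq_toMatrix',
      ← toLin'_apply', LinearMap.toMatrix'_toLin']

variable {𝕜 n : Type*} [RCLike 𝕜] [Fintype n] {A Y : Matrix n n 𝕜}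

theorem star_mulVec_dotProduct_mulVec_mulVec (h : Aᴴ * Y * A = Y) (x y : n → 𝕜) :
    star (A *ᵥ x) ⬝ᵥ Y *ᵥ (A *ᵥ y) = star x ⬝ᵥ Y *ᵥ y := by
  rw [star_mulVec, mulVec_mulVec, ← dotProduct_mulVec, mulVec_mulVec, ← Matrix.mul_assoc, h]

theorem star_mul_self_eq_one_of_mulVec_eq_smul (hY : Y.PosDef) (h : Aᴴ * Y * A = Y)
    {μ : 𝕜} {v : n → 𝕜} (hv : v ≠ 0) (hAv : A *ᵥ v = μ • v) : star μ * μ = 1 := by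
  have hscale : star v ⬝ᵥ Y *ᵥ v = (star μ * μ) * (star v ⬝ᵥ Y *ᵥ v) := by
    conv_lhs => rw [← star_mulVec_dotProduct_mulVec_mulVec h, hAv]
    simp only [star_smul, mulVec_smul, smul_dotProduct, dotProduct_smul, smul_eq_mul]
    ring
  exact (mul_eq_right₀ (hY.dotProduct_mulVec_pos hv).ne').mp hscale.symm

theorem norm_eq_one_of_mulVec_eq_smul (hY : Y.PosDef) (h : Aᴴ * Y * A = Y)
    {μ : 𝕜} {v : n → 𝕜} (hv : v ≠ 0) (hAv : A *ᵥ v = μ • v) : ‖μ‖ = 1 := by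
  have hsq : (‖μ‖ : 𝕜) ^ 2 = 1 := by
    rw [← RCLike.conj_mul]
    exact star_mul_self_eq_one_of_mulVec_eq_smul hY h hv hAv
  exact (pow_eq_one_iff_of_nonneg (norm_nonneg μ) two_ne_zero).mp (by exact_mod_cast hsq)

theorem genEigenspace_mulVecLin_two_le_eigenspace (hY : Y.PosDef) (h : Aᴴ * Y * A = Y) (μ : 𝕜) :
    Module.End.genEigenspace A.mulVecLin μ 2 ≤ Module.End.eigenspace A.mulVecLin μ := by
  intro v hv
  replace hv := (Module.End.mem_genEigenspace_nat (k := 2)).mp hv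
  simp only [LinearMap.mem_ker, pow_two, Module.End.mul_apply, LinearMap.sub_apply,
    LinearMap.smul_apply, Module.End.one_apply, mulVecLin_apply] at hv
  rw [Module.End.mem_eigenspace_iff, mulVecLin_apply]
  set w := A *ᵥ v - μ • v with hw
  by_contra hne
  have hw0 : w ≠ 0 := sub_ne_zero.mpr hne
  have hAw : A *ᵥ w = μ • w := sub_eq_zero.mp hv
  have hμ := star_mul_self_eq_one_of_mulVec_eq_smul hY h hw0 hAw
  have hμ0 : μ ≠ 0 := by rintro rfl; simp at hμ
  have hcross : star v ⬝ᵥ Y *ᵥ w = star v ⬝ᵥ Y *ᵥ w + μ * (star w ⬝ᵥ Y *ᵥ w) := by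
    conv_lhs => rw [← star_mulVec_dotProduct_mulVec_mulVec h, hAw, show A *ᵥ v = μ • v + w by
      rw [hw]; abel]
    simp only [star_add, star_smul, add_dotProduct, mulVec_smul, smul_dotProduct,
      dotProduct_smul, smul_eq_mul]
    linear_combination (star v ⬝ᵥ Y *ᵥ w) * hμ
  have hzero : μ * (star w ⬝ᵥ Y *ᵥ w) = 0 := by linear_combination -hcross
  exact (mul_ne_zero hμ0 (hY.dotProduct_mulVec_pos hw0).ne') hzero

end Matrix

/-- If `A` is a complex square matrix and there is a Hermitian positive-definite matrix
`Y` with `Aᴴ Y A = Y` (i.e. the scattering matrix `A` is lossless), then `A` is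
diagonalizable over ℂ and all its eigenvalues have modulus `1`. -/
theorem lossless_implies_diagonalizable_unit_eigenvalues (n : ℕ)
    (A Y : Matrix (Fin n) (Fin n) ℂ) (hY : Y.PosDef) (h : Aᴴ * Y * A = Y) :
    (∃ (V : Matrix (Fin n) (Fin n) ℂ) (d : Fin n → ℂ),
      IsUnit V ∧ A = V⁻¹ * Matrix.diagonal d * V) ∧
    ∀ μ : ℂ, A.charpoly.IsRoot μ → ‖μ‖ = 1 := by
  refine ⟨exists_isUnit_eq_inv_mul_diagonal_mul_of_iSup_eigenspace_eq_top
    (Module.End.iSup_eigenspace_eq_top_of_genEigenspace_two_le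
      (genEigenspace_mulVecLin_two_le_eigenspace hY h)), fun μ hμ => ?_⟩
  have hμ' : Module.End.HasEigenvalue A.mulVecLin μ := by
    rwa [Module.End.hasEigenvalue_iff_isRoot_charpoly, charpoly_mulVecLin]
  obtain ⟨v, hv, hv0⟩ := hμ'.exists_hasEigenvector
  exact norm_eq_one_of_mulVec_eq_smul hY h hv0 (Module.End.mem_eigenspace_iff.mp hv)
end

section
/- Let A be a complex n×n matrix that is diagonalizable over ℂ and whose eigenvalues all have modulus 1. Then there exists a Hermitian positive-definite n×n matrix Y such that A* Y A = Y, where A* denotes the conjugate transpose. -/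
open Matrix
open scoped ComplexOrder

/-! Writing `A = V⁻¹ * D * V` with `D` diagonal, the eigenvalues of `A` are the diagonal entries
of `D`, so `D` is unitary; then `A` is an isometry of the positive-definite Gram form `Vᴴ * V`. -/

namespace Matrix

variable {n R : Type*} [Fintype n] [DecidableEq n]

theorem charpoly_inv_mul_mul_eq [CommRing R] {V : Matrix n n R} (hV : IsUnit V)
    (D : Matrix n n R) : (V⁻¹ * D * V).charpoly = D.charpoly := by
  rw [Matrix.mul_assoc, charpoly_mul_comm, Matrix.mul_assoc,
    mul_nonsing_inv V ((isUnit_iff_isUnit_det V).mp hV), Matrix.mul_one]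

theorem isRoot_charpoly_diagonal [CommRing R] (d : n → R) (i : n) :
    (diagonal d).charpoly.IsRoot (d i) := by
  rw [charpoly_diagonal, Polynomial.IsRoot, Polynomial.eval_prod]
  exact Finset.prod_eq_zero (Finset.mem_univ i) (by simp)

theorem conjTranspose_diagonal_mul_diagonal_eq_one [CommRing R] [StarRing R] {d : n → R}
    (hd : ∀ i, star (d i) * d i = 1) : (diagonal d)ᴴ * diagonal d = 1 := by
  rw [diagonal_conjTranspose, diagonal_mul_diagonal, ← diagonal_one]
  exact congrArg diagonal (funext hd)

theorem conjTranspose_mul_gram_mul_of_conj [CommRing R] [StarRing R]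
    {V D : Matrix n n R} (hV : IsUnit V) (hD : Dᴴ * D = 1) :
    (V⁻¹ * D * V)ᴴ * (Vᴴ * V) * (V⁻¹ * D * V) = Vᴴ * V := by
  have hVV : (V⁻¹)ᴴ * Vᴴ = 1 := by
    rw [← conjTranspose_mul, mul_nonsing_inv V ((isUnit_iff_isUnit_det V).mp hV),
      conjTranspose_one]
  calc (V⁻¹ * D * V)ᴴ * (Vᴴ * V) * (V⁻¹ * D * V)
      = Vᴴ * Dᴴ * ((V⁻¹)ᴴ * Vᴴ) * (V * V⁻¹) * D * V := by
        simp only [conjTranspose_mul, Matrix.mul_assoc]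
    _ = Vᴴ * (Dᴴ * D) * V := by
        rw [hVV, mul_nonsing_inv V ((isUnit_iff_isUnit_det V).mp hV)]
        simp only [Matrix.mul_one, Matrix.mul_assoc]
    _ = Vᴴ * V := by rw [hD, Matrix.mul_one]

end Matrix

/-- If `A` is a complex square matrix which is diagonalizable over ℂ and all of whose
eigenvalues have modulus `1`, then there is a Hermitian positive-definite matrix `Y`
with `Aᴴ Y A = Y` (i.e. the scattering matrix `A` is lossless). -/
theorem diagonalizable_unit_eigenvalues_implies_lossless (n : ℕ)
    (A : Matrix (Fin n) (Fin n) ℂ)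
    (hdiag : ∃ (V : Matrix (Fin n) (Fin n) ℂ) (d : Fin n → ℂ),
      IsUnit V ∧ A = V⁻¹ * Matrix.diagonal d * V)
    (heig : ∀ μ : ℂ, A.charpoly.IsRoot μ → ‖μ‖ = 1) :
    ∃ Y : Matrix (Fin n) (Fin n) ℂ, Y.PosDef ∧ Aᴴ * Y * A = Y := by
  obtain ⟨V, d, hV, rfl⟩ := hdiag
  have hd_norm : ∀ i, ‖d i‖ = 1 := fun i =>
    heig (d i) (by rw [charpoly_inv_mul_mul_eq hV]; exact isRoot_charpoly_diagonal d i)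
  have hd_unit : ∀ i, star (d i) * d i = 1 := fun i => by
    rw [Complex.star_def, Complex.conj_mul', hd_norm i]; norm_num
  exact ⟨Vᴴ * V, PosDef.conjTranspose_mul_self V (mulVec_injective_iff_isUnit.mpr hV),
    conjTranspose_mul_gram_mul_of_conj hV (conjTranspose_diagonal_mul_diagonal_eq_one hd_unit)⟩
end

section
/- Let D be a real n×n matrix and suppose D = U Σ Vᵀ where U and V are orthogonal n×n matrices and Σ is a diagonal n×n matrix with nonnegative diagonal entries (a singular value decomposition of D). Then for every orthogonal n×n matrix A, ‖U·Vᵀ − D‖_F ≤ ‖A − D‖_F, i.e., A = U·Vᵀ minimizes the Frobenius distance to D over all orthogonal matrices. -/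
open Matrix

/-- The Frobenius norm of a real square matrix. -/
noncomputable def frobNorm {n : ℕ} (M : Matrix (Fin n) (Fin n) ℝ) : ℝ :=
  Real.sqrt (∑ i, ∑ j, (M i j) ^ 2)

lemma sumsq_eq_trace {n : ℕ} (M : Matrix (Fin n) (Fin n) ℝ) :
    ∑ i, ∑ j, (M i j) ^ 2 = Matrix.trace (Mᵀ * M) := by
  simp [Matrix.trace, Matrix.mul_apply, Matrix.diag, sq]
  rw [Finset.sum_comm]

lemma trace_transpose_mul {n : ℕ} (M N : Matrix (Fin n) (Fin n) ℝ) :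
    Matrix.trace (Mᵀ * N) = Matrix.trace (Nᵀ * M) := by
  rw [← Matrix.trace_transpose (Mᵀ * N), Matrix.transpose_mul, Matrix.transpose_transpose]

/-- If `D = U Σ Vᵀ` is a singular value decomposition of the real matrix `D`
(`U`, `V` orthogonal, `Σ` diagonal with nonnegative entries), then the orthogonal
matrix `U Vᵀ` minimizes the Frobenius distance to `D` over all orthogonal matrices. -/
theorem orthogonal_procrustes (n : ℕ) (D U V S : Matrix (Fin n) (Fin n) ℝ)
    (hU : Uᵀ * U = 1) (hV : Vᵀ * V = 1)
    (hS : ∃ d : Fin n → ℝ, (∀ i, 0 ≤ d i) ∧ S = Matrix.diagonal d)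
    (hD : D = U * S * Vᵀ) :
    ∀ A : Matrix (Fin n) (Fin n) ℝ, Aᵀ * A = 1 →
      frobNorm (U * Vᵀ - D) ≤ frobNorm (A - D) := by
  obtain ⟨d, hd, rfl⟩ := hS
  intro A hA
  have hVVt : V * Vᵀ = 1 := mul_eq_one_comm.mp hV
  have hAAt : A * Aᵀ = 1 := mul_eq_one_comm.mp hA
  apply Real.sqrt_le_sqrt
  rw [sumsq_eq_trace, sumsq_eq_trace]
  have expand : ∀ M : Matrix (Fin n) (Fin n) ℝ,
      Matrix.trace ((M - D)ᵀ * (M - D)) =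
        Matrix.trace (Mᵀ * M) - 2 * Matrix.trace (Mᵀ * D) + Matrix.trace (Dᵀ * D) := by
    intro M
    rw [Matrix.transpose_sub, Matrix.sub_mul, Matrix.mul_sub, Matrix.mul_sub,
      Matrix.trace_sub, Matrix.trace_sub, Matrix.trace_sub,
      _root_.trace_transpose_mul D M]
    ring
  rw [expand, expand]
  have h1 : Matrix.trace ((U * Vᵀ)ᵀ * (U * Vᵀ)) = Matrix.trace (Aᵀ * A) := by
    rw [hA, Matrix.transpose_mul, Matrix.transpose_transpose,
      show V * Uᵀ * (U * Vᵀ) = V * (Uᵀ * U) * Vᵀ by noncomm_ring, hU, Matrix.mul_one, hVVt]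
  rw [h1]
  have key : Matrix.trace (Aᵀ * D) ≤ Matrix.trace ((U * Vᵀ)ᵀ * D) := by
    set Z := Vᵀ * Aᵀ * U with hZdef
    have hZ : Zᵀ * Z = 1 := by
      rw [hZdef, Matrix.transpose_mul, Matrix.transpose_mul, Matrix.transpose_transpose,
        Matrix.transpose_transpose]
      calc Uᵀ * (A * V) * (Vᵀ * Aᵀ * U) = Uᵀ * (A * (V * Vᵀ) * Aᵀ) * U := by noncomm_ring
        _ = 1 := by rw [hVVt, Matrix.mul_one, hAAt, Matrix.mul_one, hU]
    have hZ1 : ∀ i, Z i i ≤ 1 := by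
      intro i
      have hsum : ∑ k, (Z k i) ^ 2 = 1 := by
        have := congrFun (congrFun hZ i) i
        simpa [Matrix.mul_apply, sq] using this
      have h2 : (Z i i) ^ 2 ≤ 1 := by
        rw [← hsum]
        exact Finset.single_le_sum (f := fun k => (Z k i)^2)
          (fun k _ => sq_nonneg _) (Finset.mem_univ i)
      nlinarith [sq_nonneg (Z i i - 1)]
    have hAD : Matrix.trace (Aᵀ * D) = ∑ i, Z i i * d i := by
      rw [hD, show Aᵀ * (U * Matrix.diagonal d * Vᵀ) = Aᵀ * U * Matrix.diagonal d * Vᵀ by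
        noncomm_ring, Matrix.trace_mul_comm, hZdef,
        show Vᵀ * (Aᵀ * U * Matrix.diagonal d) = Vᵀ * Aᵀ * U * Matrix.diagonal d by noncomm_ring]
      simp [Matrix.trace, Matrix.diag, Matrix.mul_apply, Matrix.diagonal]
    have hUVD : Matrix.trace ((U * Vᵀ)ᵀ * D) = ∑ i, d i := by
      rw [hD, Matrix.transpose_mul, Matrix.transpose_transpose,
        show V * Uᵀ * (U * Matrix.diagonal d * Vᵀ) = V * (Uᵀ * U) * Matrix.diagonal d * Vᵀ by
          noncomm_ring, hU, Matrix.mul_one, Matrix.trace_mul_comm,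
        show Vᵀ * (V * Matrix.diagonal d) = (Vᵀ * V) * Matrix.diagonal d by noncomm_ring,
        hV, Matrix.one_mul]
      simp [Matrix.trace, Matrix.diag, Matrix.diagonal]
    rw [hAD, hUVD]
    apply Finset.sum_le_sum
    intro i _
    calc Z i i * d i ≤ 1 * d i := mul_le_mul_of_nonneg_right (hZ1 i) (hd i)
      _ = d i := one_mul _
  linarith
end

section
/- Let D be a real n×n matrix with singular value decomposition D = U Σ Vᵀ, where U and V are orthogonal and Σ is diagonal with nonnegative diagonal entries. Then for every orthogonal n×n matrix A, tr(Aᵀ D) ≤ tr(Σ), with equality when A = U·Vᵀ. -/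
open Matrix

lemma diag_le_one_of_orth {n : ℕ} (W : Matrix (Fin n) (Fin n) ℝ)
    (hW : Wᵀ * W = 1) (i : Fin n) : W i i ≤ 1 := by
  have h : ∑ j, W j i * W j i = 1 := by
    have := congrFun (congrFun hW i) i
    simpa [Matrix.mul_apply, Matrix.transpose_apply, Matrix.one_apply] using this
  have h2 : (W i i) ^ 2 ≤ 1 := by
    rw [← h, sq]
    exact Finset.single_le_sum (f := fun j => W j i * W j i)
      (fun j _ => mul_self_nonneg _) (Finset.mem_univ i)
  nlinarith [h2]

/-- If `D = U Σ Vᵀ` is a singular value decomposition of the real matrix `D`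
(`U`, `V` orthogonal, `Σ` diagonal with nonnegative entries), then for every
orthogonal matrix `A`, `tr(Aᵀ D) ≤ tr(Σ)`, with equality when `A = U Vᵀ`. -/
theorem trace_orthogonal_le_trace_sigma (n : ℕ) (D U V S : Matrix (Fin n) (Fin n) ℝ)
    (hU : Uᵀ * U = 1) (hV : Vᵀ * V = 1)
    (hS : ∃ d : Fin n → ℝ, (∀ i, 0 ≤ d i) ∧ S = Matrix.diagonal d)
    (hD : D = U * S * Vᵀ) :
    (∀ A : Matrix (Fin n) (Fin n) ℝ, Aᵀ * A = 1 → (Aᵀ * D).trace ≤ S.trace) ∧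
    ((U * Vᵀ)ᵀ * D).trace = S.trace := by
  obtain ⟨d, hd, rfl⟩ := hS
  have hVV : V * Vᵀ = 1 := mul_eq_one_comm.mp hV
  constructor
  · intro A hA
    have hAA : A * Aᵀ = 1 := mul_eq_one_comm.mp hA
    set W := Vᵀ * Aᵀ * U with hWdef
    have hWorth : Wᵀ * W = 1 := by
      simp only [hWdef, Matrix.transpose_mul, Matrix.transpose_transpose]
      calc Uᵀ * (A * V) * (Vᵀ * Aᵀ * U)
          = Uᵀ * (A * ((V * Vᵀ) * Aᵀ) * U) := by noncomm_ring
        _ = 1 := by rw [hVV]; simp [Matrix.mul_assoc, hAA, hU]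
    have htr : (Aᵀ * D).trace = (W * Matrix.diagonal d).trace := by
      rw [hD, hWdef]
      rw [show Aᵀ * (U * Matrix.diagonal d * Vᵀ) = (Aᵀ * U * Matrix.diagonal d) * Vᵀ by
        noncomm_ring]
      rw [Matrix.trace_mul_comm]
      noncomm_ring
    rw [htr]
    have : (W * Matrix.diagonal d).trace = ∑ i, W i i * d i := by
      simp [Matrix.trace, Matrix.diag, Matrix.mul_diagonal]
    rw [this]
    have : (Matrix.diagonal d).trace = ∑ i, d i := by simp [Matrix.trace]
    rw [this]
    apply Finset.sum_le_sum
    intro i _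
    calc W i i * d i ≤ 1 * d i :=
          mul_le_mul_of_nonneg_right (diag_le_one_of_orth W hWorth i) (hd i)
      _ = d i := one_mul _
  · rw [hD, Matrix.transpose_mul, Matrix.transpose_transpose]
    calc (V * Uᵀ * (U * Matrix.diagonal d * Vᵀ)).trace
        = (V * ((Uᵀ * U) * Matrix.diagonal d) * Vᵀ).trace := by noncomm_ring
      _ = (V * Matrix.diagonal d * Vᵀ).trace := by rw [hU]; simp
      _ = (Vᵀ * (V * Matrix.diagonal d)).trace := by rw [Matrix.trace_mul_comm]
      _ = (Matrix.diagonal d).trace := by rw [← Matrix.mul_assoc, hV, Matrix.one_mul]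
end

section
/- Let D be a real n×n matrix and let M = D + Dᵀ. Let v₀ be a unit eigenvector of the symmetric matrix M associated with its largest eigenvalue. Then for every unit vector v in ℝⁿ, ‖(2·v₀v₀ᵀ − I) − D‖_F ≤ ‖(2·vvᵀ − I) − D‖_F; that is, v₀ solves the problem of minimizing ‖(2·vvᵀ − I) − D‖_F over unit vectors v. -/
open Matrix

/-!
For a unit vector `v`, the Householder matrix `H = 2 v vᵀ - 1` is a symmetric involution, so
`‖H - D‖_F² = tr((H - D)ᵀ (H - D)) = n - 2 tr(H D) + ‖D‖_F²`, and
`tr(H D) = 2 vᵀ D v - tr D = vᵀ (D + Dᵀ) v - tr D`. Minimizing the distance therefore amounts to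
maximizing the Rayleigh quotient of `D + Dᵀ`, whose maximum is its largest eigenvalue, attained at
`v₀`.
-/

namespace Matrix

section Householder

variable {ι R : Type*} [CommRing R]

theorem householder_transpose [DecidableEq ι] (v : ι → R) :
    ((2 : R) • vecMulVec v v - 1)ᵀ = (2 : R) • vecMulVec v v - 1 := by
  simp [transpose_vecMulVec]

theorem householder_mul_self [Fintype ι] [DecidableEq ι] {v : ι → R} (hv : v ⬝ᵥ v = 1) :
    ((2 : R) • vecMulVec v v - 1) * ((2 : R) • vecMulVec v v - 1) = 1 := by
  simp only [sub_mul, mul_sub, Matrix.smul_mul, Matrix.mul_smul, vecMulVec_mul_vecMulVec, hv,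
    one_smul, mul_one, one_mul, smul_smul]
  module

theorem dotProduct_add_transpose_mulVec [Fintype ι] (v : ι → R) (D : Matrix ι ι R) :
    v ⬝ᵥ (D + Dᵀ) *ᵥ v = 2 * (v ⬝ᵥ D *ᵥ v) := by
  rw [add_mulVec, dotProduct_add, mulVec_transpose, dotProduct_comm v (v ᵥ* D),
    ← dotProduct_mulVec, two_mul]

theorem trace_householder_mul [Fintype ι] [DecidableEq ι] (v : ι → R) (D : Matrix ι ι R) :
    trace (((2 : R) • vecMulVec v v - 1) * D) = 2 * (v ⬝ᵥ D *ᵥ v) - trace D := by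
  rw [sub_mul, smul_mul, vecMulVec_mul, one_mul, trace_sub, trace_smul, trace_vecMulVec,
    dotProduct_comm, ← dotProduct_mulVec, smul_eq_mul]

end Householder

section Real

variable {ι : Type*} [Fintype ι] [DecidableEq ι]

theorem IsHermitian.dotProduct_mulVec_le {M : Matrix ι ι ℝ} (hM : M.IsHermitian) {μ : ℝ}
    (hmax : ∀ (μ' : ℝ) (w : ι → ℝ), w ≠ 0 → M *ᵥ w = μ' • w → μ' ≤ μ) (v : ι → ℝ) :
    v ⬝ᵥ M *ᵥ v ≤ μ * (v ⬝ᵥ v) := by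
  have hA : (μ • 1 - M).IsHermitian := (isHermitian_one.smul (IsSelfAdjoint.all μ)).sub hM
  have hpsd : (μ • 1 - M).PosSemidef := by
    rw [hA.posSemidef_iff_eigenvalues_nonneg]
    intro i
    have hvec := hA.mulVec_eigenvectorBasis i
    rw [sub_mulVec, smul_mulVec, one_mulVec] at hvec
    have hne : (hA.eigenvectorBasis i : ι → ℝ) ≠ 0 :=
      (WithLp.ofLp_eq_zero 2).ne.2 (hA.eigenvectorBasis.orthonormal.ne_zero i)
    have hle := hmax (μ - hA.eigenvalues i) _ hne (by rw [sub_smul, ← hvec]; simp)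
    simpa using hle
  have hnonneg := hpsd.dotProduct_mulVec_nonneg v
  simp only [star_trivial, sub_mulVec, smul_mulVec, one_mulVec, dotProduct_sub,
    dotProduct_smul, smul_eq_mul] at hnonneg
  linarith

omit [DecidableEq ι] in
theorem sum_sq_apply_eq_trace {κ : Type*} [Fintype κ] (M : Matrix ι κ ℝ) :
    ∑ i, ∑ j, M i j ^ 2 = trace (Mᵀ * M) := by
  simp only [trace, diag, mul_apply, transpose_apply, sq]
  exact Finset.sum_comm

theorem trace_sub_transpose_mul_sub {H : Matrix ι ι ℝ} (hHt : Hᵀ = H) (hHH : H * H = 1)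
    (D : Matrix ι ι ℝ) :
    trace ((H - D)ᵀ * (H - D)) = Fintype.card ι - 2 * trace (H * D) + trace (Dᵀ * D) := by
  have hDH : trace (Dᵀ * H) = trace (H * D) := by
    rw [← trace_transpose, transpose_mul, transpose_transpose, hHt]
  rw [transpose_sub, hHt, sub_mul, mul_sub, mul_sub, hHH]
  simp only [trace_sub, trace_one, hDH]
  ring

theorem sum_sq_householder_sub {v : ι → ℝ} (hv : v ⬝ᵥ v = 1) (D : Matrix ι ι ℝ) :
    ∑ i, ∑ j, (((2 : ℝ) • vecMulVec v v - 1 - D) i j) ^ 2 =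
      Fintype.card ι + 2 * trace D + trace (Dᵀ * D) - 2 * (v ⬝ᵥ (D + Dᵀ) *ᵥ v) := by
  rw [sum_sq_apply_eq_trace, trace_sub_transpose_mul_sub (householder_transpose v)
    (householder_mul_self hv), trace_householder_mul, dotProduct_add_transpose_mulVec]
  ring

end Real

end Matrix

/-- Let `M = D + Dᵀ` and let `v₀` be a unit eigenvector of the symmetric matrix `M`
associated with its largest eigenvalue `μ`.  Then the Householder reflection
`2 v₀ v₀ᵀ − I` minimizes the Frobenius distance `‖(2 v vᵀ − I) − D‖_F` over all
unit vectors `v`. -/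
theorem householder_frob_min (n : ℕ) (D : Matrix (Fin n) (Fin n) ℝ)
    (v₀ : Fin n → ℝ) (μ : ℝ)
    (hunit : ∑ i, (v₀ i) ^ 2 = 1)
    (heig : (D + Dᵀ).mulVec v₀ = μ • v₀)
    (hmax : ∀ (μ' : ℝ) (w : Fin n → ℝ), w ≠ 0 → (D + Dᵀ).mulVec w = μ' • w → μ' ≤ μ) :
    ∀ v : Fin n → ℝ, ∑ i, (v i) ^ 2 = 1 →
      frobNorm ((2 : ℝ) • Matrix.vecMulVec v₀ v₀ - 1 - D) ≤
        frobNorm ((2 : ℝ) • Matrix.vecMulVec v v - 1 - D) := by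
  intro v hv
  have dotProduct_self_eq_one {u : Fin n → ℝ} (hu : ∑ i, u i ^ 2 = 1) : u ⬝ᵥ u = 1 := by
    simpa [dotProduct, sq] using hu
  have hM : (D + Dᵀ).IsHermitian := by
    simpa [conjTranspose_eq_transpose_of_trivial] using isHermitian_add_transpose_self D
  have hv₀ : v₀ ⬝ᵥ (D + Dᵀ) *ᵥ v₀ = μ := by
    rw [heig, dotProduct_smul, dotProduct_self_eq_one hunit, smul_eq_mul, mul_one]
  have hv_le : v ⬝ᵥ (D + Dᵀ) *ᵥ v ≤ μ := by
    simpa [dotProduct_self_eq_one hv] using hM.dotProduct_mulVec_le hmax v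
  unfold frobNorm
  rw [sum_sq_householder_sub (dotProduct_self_eq_one hunit),
    sum_sq_householder_sub (dotProduct_self_eq_one hv)]
  gcongr
  rwa [hv₀]
end

section
/- Let K ≥ 3 and let A be a real K×K orthogonal matrix all of whose off-diagonal entries are equal to a common value a₀ ≠ 0. Then A = (2/K)·𝟙𝟙ᵀ − I or A = −((2/K)·𝟙𝟙ᵀ − I), where 𝟙 is the all-ones vector in ℝᴷ and I the K×K identity. In particular a₀ = ±2/K and every diagonal entry of A equals ∓(K−2)/K. -/
open Matrix Finset

/-- A `K × K` orthogonal matrix (`K ≥ 3`) all of whose off-diagonal entries are equal to a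
common nonzero value `a₀` is `±((2/K) 𝟙𝟙ᵀ − I)`; in particular `a₀ = ±2/K` and every
diagonal entry equals `∓(K−2)/K`. -/
theorem isotropic_scattering_characterization (K : ℕ) (hK : 3 ≤ K)
    (A : Matrix (Fin K) (Fin K) ℝ) (a₀ : ℝ) (ha₀ : a₀ ≠ 0)
    (horth : Aᵀ * A = 1)
    (hoff : ∀ i j : Fin K, i ≠ j → A i j = a₀) :
    (A = (2 / (K : ℝ)) • Matrix.vecMulVec 1 1 - 1 ∧
      a₀ = 2 / (K : ℝ) ∧ ∀ i, A i i = -(((K : ℝ) - 2) / K)) ∨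
    (A = -((2 / (K : ℝ)) • Matrix.vecMulVec 1 1 - 1) ∧
      a₀ = -(2 / (K : ℝ)) ∧ ∀ i, A i i = ((K : ℝ) - 2) / K) := by
  have hK3 : (3:ℝ) ≤ (K:ℝ) := by exact_mod_cast hK
  have hKne : (K:ℝ) ≠ 0 := by linarith
  have hentry : ∀ j k : Fin K, ∑ i, A i j * A i k = if j = k then (1:ℝ) else 0 := by
    intro j k
    have := congrFun (congrFun horth j) k
    simpa [Matrix.mul_apply, Matrix.transpose_apply, Matrix.one_apply] using this
  -- off-diagonal orthogonality relations
  have hoffrel : ∀ j k : Fin K, j ≠ k →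
      A j j * a₀ + a₀ * A k k + ((K:ℝ) - 2) * a₀ ^ 2 = 0 := by
    intro j k hjk
    have hsum := hentry j k
    rw [if_neg hjk] at hsum
    have hsub : ({j, k} : Finset (Fin K)) ⊆ univ := subset_univ _
    rw [← Finset.sum_sdiff hsub, Finset.sum_pair hjk] at hsum
    have hconst : ∑ i ∈ univ \ {j, k}, A i j * A i k
        = ∑ _i ∈ univ \ {j, k}, a₀ ^ 2 := by
      apply Finset.sum_congr rfl
      intro i hi
      simp only [mem_sdiff, mem_univ, mem_insert, mem_singleton, true_and] at hi
      push_neg at hi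
      rw [hoff i j hi.1, hoff i k hi.2]; ring
    rw [hconst, Finset.sum_const] at hsum
    have hcard : (univ \ ({j, k} : Finset (Fin K))).card = K - 2 := by
      rw [Finset.card_sdiff_of_subset hsub, Finset.card_pair hjk]
      simp
    rw [hcard] at hsum
    have hcast : ((K - 2 : ℕ) : ℝ) = (K:ℝ) - 2 := by
      have : (2:ℕ) ≤ K := by omega
      push_cast [Nat.cast_sub this]; ring
    rw [nsmul_eq_mul, hcast, hoff j k hjk, hoff k j (Ne.symm hjk)] at hsum
    linarith [hsum]
  -- diagonal normalization
  have hdiag : ∀ j : Fin K, A j j ^ 2 + ((K:ℝ) - 1) * a₀ ^ 2 = 1 := by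
    intro j
    have hsum := hentry j j
    rw [if_pos rfl] at hsum
    rw [← Finset.sum_erase_add _ _ (mem_univ j)] at hsum
    have hconst : ∑ i ∈ univ.erase j, A i j * A i j
        = ∑ _i ∈ univ.erase j, a₀ ^ 2 := by
      apply Finset.sum_congr rfl
      intro i hi
      rw [hoff i j (Finset.ne_of_mem_erase hi)]; ring
    rw [hconst, Finset.sum_const, Finset.card_erase_of_mem (mem_univ j)] at hsum
    simp only [card_univ, Fintype.card_fin] at hsum
    have hcast : ((K - 1 : ℕ) : ℝ) = (K:ℝ) - 1 := by
      have : (1:ℕ) ≤ K := by omega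
      push_cast [Nat.cast_sub this]; ring
    rw [nsmul_eq_mul, hcast] at hsum
    nlinarith [hsum]
  -- all diagonal entries coincide
  have heq : ∀ i i' : Fin K, A i i = A i' i' := by
    intro i i'
    by_cases hii : i = i'
    · rw [hii]
    · have hlt : ({i, i'} : Finset (Fin K)).card < (Finset.univ : Finset (Fin K)).card := by
        have h1 : ({i, i'} : Finset (Fin K)).card ≤ 2 := Finset.card_insert_le _ _ |>.trans (by simp)
        simp only [card_univ, Fintype.card_fin]
        omega
      have hne : ({i, i'} : Finset (Fin K)) ≠ Finset.univ := by
        intro h; rw [h] at hlt; exact lt_irrefl _ hlt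
      obtain ⟨j, -, hj⟩ := Finset.exists_of_ssubset (Finset.ssubset_univ_iff.mpr hne)
      simp only [mem_insert, mem_singleton] at hj
      push_neg at hj
      have h1 := hoffrel i j (fun h => hj.1 h.symm)
      have h2 := hoffrel i' j (fun h => hj.2 h.symm)
      have := sub_eq_zero.mpr (h1.trans h2.symm)
      have hmul : (A i i - A i' i') * a₀ = 0 := by linarith
      rcases mul_eq_zero.mp hmul with h | h
      · linarith
      · exact absurd h ha₀
  -- the key equation: 2 d = -(K-2) a₀ where d is any diagonal entry
  have i0 : Fin K := ⟨0, by omega⟩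
  have hd : ∀ i : Fin K, 2 * A i i = -((K:ℝ) - 2) * a₀ := by
    intro i
    have i1 : Fin K := ⟨1, by omega⟩
    obtain ⟨j, hj⟩ : ∃ j : Fin K, j ≠ i := by
      refine ⟨if i = ⟨0, by omega⟩ then ⟨1, by omega⟩ else ⟨0, by omega⟩, ?_⟩
      split
      · rename_i h; rw [h]; intro hc; exact absurd (Fin.mk.injEq .. ▸ hc) (by simp)
      · rename_i h; exact fun hc => h hc.symm
    have h1 := hoffrel i j (Ne.symm hj)
    have h2 := heq j i
    have hmul : a₀ * (2 * A i i + ((K:ℝ) - 2) * a₀) = 0 := by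
      rw [h2] at h1; ring_nf; ring_nf at h1; linarith
    rcases mul_eq_zero.mp hmul with h | h
    · exact absurd h ha₀
    · linarith
  -- solve for a₀
  have hsq : ((K:ℝ) * a₀ - 2) * ((K:ℝ) * a₀ + 2) = 0 := by
    have h1 := hdiag i0
    have h2 := hd i0
    have h3 : (2 * A i0 i0) ^ 2 = ((K:ℝ) - 2) ^ 2 * a₀ ^ 2 := by rw [h2]; ring
    linear_combination 4 * h1 - h3
  have hdval : ∀ i : Fin K, A i i = -((K:ℝ) - 2) * a₀ / 2 := by
    intro i; have := hd i; linarith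
  rcases mul_eq_zero.mp hsq with h | h
  · left
    have ha : a₀ = 2 / (K:ℝ) := by field_simp; linarith
    have hdv : ∀ i, A i i = -(((K:ℝ) - 2) / K) := by
      intro i; rw [hdval i, ha]; field_simp; try ring
    refine ⟨?_, ha, hdv⟩
    ext i j
    by_cases hij : i = j
    · subst hij
      simp only [Matrix.sub_apply, Matrix.smul_apply, Matrix.vecMulVec_apply,
        Pi.one_apply, Matrix.one_apply_eq, smul_eq_mul, mul_one]
      rw [hdv i]; field_simp; try ring
    · simp only [Matrix.sub_apply, Matrix.smul_apply, Matrix.vecMulVec_apply,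
        Pi.one_apply, Matrix.one_apply_ne hij, smul_eq_mul, mul_one, sub_zero]
      rw [hoff i j hij, ha]
  · right
    have ha : a₀ = -(2 / (K:ℝ)) := by field_simp; linarith
    have hdv : ∀ i, A i i = ((K:ℝ) - 2) / K := by
      intro i; rw [hdval i, ha]; field_simp; try ring
    refine ⟨?_, ha, hdv⟩
    ext i j
    by_cases hij : i = j
    · subst hij
      simp only [Matrix.neg_apply, Matrix.sub_apply, Matrix.smul_apply, Matrix.vecMulVec_apply,
        Pi.one_apply, Matrix.one_apply_eq, smul_eq_mul, mul_one]
      rw [hdv i]; field_simp; try ring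
    · simp only [Matrix.neg_apply, Matrix.sub_apply, Matrix.smul_apply, Matrix.vecMulVec_apply,
        Pi.one_apply, Matrix.one_apply_ne hij, smul_eq_mul, mul_one, sub_zero]
      rw [hoff i j hij, ha]
end
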